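/- Let Ψ_edge(λ) := √(λ(1+λ)) / ((1+2λ+2√(λ(1+λ)))^{2/3} + (1+2λ−2√(λ(1+λ)))^{2/3} + 1) for λ ≥ 0. Then there exists a constant C > 0 such that for all λ > 0 and all ε ∈ (0,1], |Ψ_edge((1+ε)λ) − Ψ_edge(λ)| ≤ C ε Ψ_edge(λ). -/

import Mathlib

/-!
Write `s = √(l(1+l))` and `a = 1 + 2l + 2s`. Since `(1 + 2l)² - 4s² = 1`, the second base in
`PsiEdge` is `a⁻¹`, so `PsiEdge l = s / (u + u⁻¹ + 1)` with `u = a^{2/3}`. Replacing `l` by `t l`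
with `t ≥ 1` changes `s` and `a`, hence `u`, `u⁻¹` and the denominator, by a factor of at most `t`,
so `PsiEdge (t l)` agrees with `PsiEdge l` up to a factor `t²`. For `t = 1 + ε` this is a relative
error of order `ε`.
-/

/-- The universal edge shape function. -/
noncomputable def PsiEdge (l : ℝ) : ℝ :=
  Real.sqrt (l * (1 + l)) /
    ((1 + 2*l + 2*Real.sqrt (l*(1+l))) ^ ((2:ℝ)/3) +
     (1 + 2*l - 2*Real.sqrt (l*(1+l))) ^ ((2:ℝ)/3) + 1)

open Real

def WithinFactor (t x y : ℝ) : Prop := x ≤ t * y ∧ y ≤ t * x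

namespace WithinFactor

variable {t t' x y x' y' : ℝ}

lemma refl (ht : 1 ≤ t) (hx : 0 ≤ x) : WithinFactor t x x :=
  ⟨le_mul_of_one_le_left hx ht, le_mul_of_one_le_left hx ht⟩

lemma of_le_of_le_mul (ht : 1 ≤ t) (hy : 0 ≤ y) (hxy : x ≤ y) (hyx : y ≤ t * x) :
    WithinFactor t x y :=
  ⟨hxy.trans (le_mul_of_one_le_left hy ht), hyx⟩

lemma add (h : WithinFactor t x y) (h' : WithinFactor t x' y') :
    WithinFactor t (x + x') (y + y') :=
  ⟨by linarith [h.1, h'.1], by linarith [h.2, h'.2]⟩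

lemma inv (h : WithinFactor t x y) (hx : 0 < x) (hy : 0 < y) : WithinFactor t x⁻¹ y⁻¹ := by
  constructor
  · rw [← div_eq_mul_inv, le_div_iff₀ hy, inv_mul_le_iff₀ hx, mul_comm]
    exact h.2
  · rw [← div_eq_mul_inv, le_div_iff₀ hx, inv_mul_le_iff₀ hy, mul_comm]
    exact h.1

lemma mul (h : WithinFactor t x y) (h' : WithinFactor t' x' y') (hx : 0 ≤ x) (hy : 0 ≤ y)
    (hx' : 0 ≤ x') (hy' : 0 ≤ y') : WithinFactor (t * t') (x * x') (y * y') := by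
  constructor
  · calc x * x' ≤ (t * y) * (t' * y') := mul_le_mul h.1 h'.1 hx' (hx.trans h.1)
      _ = t * t' * (y * y') := by ring
  · calc y * y' ≤ (t * x) * (t' * x') := mul_le_mul h.2 h'.2 hy' (hy.trans h.2)
      _ = t * t' * (x * x') := by ring

lemma div (h : WithinFactor t x y) (h' : WithinFactor t' x' y') (hx : 0 ≤ x) (hy : 0 ≤ y)
    (hx' : 0 < x') (hy' : 0 < y') : WithinFactor (t * t') (x / x') (y / y') := by
  simpa only [div_eq_mul_inv] using
    h.mul (h'.inv hx' hy') hx hy (inv_nonneg.2 hx'.le) (inv_nonneg.2 hy'.le)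

lemma rpow (h : WithinFactor t x y) (ht : 1 ≤ t) (hx : 0 ≤ x) (hy : 0 ≤ y) {p : ℝ}
    (hp₀ : 0 ≤ p) (hp₁ : p ≤ 1) : WithinFactor t (x ^ p) (y ^ p) := by
  have key : ∀ {a b : ℝ}, 0 ≤ a → 0 ≤ b → a ≤ t * b → a ^ p ≤ t * b ^ p := by
    intro a b ha hb hab
    calc _ ≤ (t * b) ^ p := rpow_le_rpow ha hab hp₀
      _ = t ^ p * b ^ p := mul_rpow (by linarith) hb
      _ ≤ t * b ^ p := mul_le_mul_of_nonneg_right (rpow_le_self_of_one_le ht hp₁)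
          (rpow_nonneg hb p)
  exact ⟨key hx hy h.1, key hy hx h.2⟩

lemma abs_sub_le (h : WithinFactor t x y) (ht : 1 ≤ t) (hx : 0 ≤ x) :
    |y - x| ≤ t * (t - 1) * x := by
  rw [abs_sub_le_iff]
  have hy : y ≤ t * x := h.2
  have hxy : x ≤ t * y := h.1
  constructor
  · nlinarith [mul_nonneg (mul_nonneg (sub_nonneg.2 ht) (sub_nonneg.2 ht)) hx]
  · nlinarith [mul_le_mul_of_nonneg_left hy (sub_nonneg.2 ht)]

end WithinFactor

noncomputable def edgeBase (l : ℝ) : ℝ := 1 + 2 * l + 2 * √(l * (1 + l))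

lemma edgeBase_pos {l : ℝ} (hl : 0 ≤ l) : 0 < edgeBase l := by
  unfold edgeBase; positivity

lemma psiEdge_eq {l : ℝ} (hl : 0 ≤ l) :
    PsiEdge l = √(l * (1 + l)) /
      (edgeBase l ^ ((2 : ℝ) / 3) + (edgeBase l ^ ((2 : ℝ) / 3))⁻¹ + 1) := by
  have hs : √(l * (1 + l)) ^ 2 = l * (1 + l) := sq_sqrt (by positivity)
  have hinv : 1 + 2 * l - 2 * √(l * (1 + l)) = (edgeBase l)⁻¹ :=
    eq_inv_of_mul_eq_one_left (by unfold edgeBase; linear_combination -4 * hs)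
  rw [PsiEdge, hinv, inv_rpow (edgeBase_pos hl).le]
  rfl

lemma psiEdge_nonneg {l : ℝ} (hl : 0 ≤ l) : 0 ≤ PsiEdge l := by
  have ha := edgeBase_pos hl
  rw [psiEdge_eq hl]
  positivity

lemma withinFactor_sqrt_mul_one_add {l t : ℝ} (hl : 0 ≤ l) (ht : 1 ≤ t) :
    WithinFactor t √(l * (1 + l)) √(t * l * (1 + t * l)) := by
  have htl : l ≤ t * l := le_mul_of_one_le_left hl ht
  refine .of_le_of_le_mul ht (sqrt_nonneg _) (sqrt_le_sqrt (by nlinarith)) ?_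
  rw [sqrt_le_iff, mul_pow, sq_sqrt (by positivity)]
  exact ⟨by positivity, by nlinarith [mul_le_mul_of_nonneg_left htl (by positivity : 0 ≤ t * l)]⟩

lemma withinFactor_edgeBase {l t : ℝ} (hl : 0 ≤ l) (ht : 1 ≤ t) :
    WithinFactor t (edgeBase l) (edgeBase (t * l)) := by
  have hs := withinFactor_sqrt_mul_one_add hl ht
  have hs' : 0 ≤ √(t * l * (1 + t * l)) := sqrt_nonneg _
  unfold edgeBase
  constructor <;> nlinarith [hs.1, hs.2, mul_le_mul_of_nonneg_right ht hl]

lemma withinFactor_psiEdge {l t : ℝ} (hl : 0 ≤ l) (ht : 1 ≤ t) :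
    WithinFactor (t * t) (PsiEdge l) (PsiEdge (t * l)) := by
  have htl : 0 ≤ t * l := by positivity
  have ha := edgeBase_pos hl
  have ha' := edgeBase_pos htl
  have hu := (withinFactor_edgeBase hl ht).rpow ht ha.le ha'.le
    (p := (2 : ℝ) / 3) (by norm_num) (by norm_num)
  have hu₀ := rpow_pos_of_pos ha ((2 : ℝ) / 3)
  have hu₀' := rpow_pos_of_pos ha' ((2 : ℝ) / 3)
  have hden := (hu.add (hu.inv hu₀ hu₀')).add (.refl ht zero_le_one)
  rw [psiEdge_eq hl, psiEdge_eq htl]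
  exact (withinFactor_sqrt_mul_one_add hl ht).div hden (sqrt_nonneg _) (sqrt_nonneg _)
    (by positivity) (by positivity)

theorem stmt_4 : ∃ C : ℝ, 0 < C ∧ ∀ l : ℝ, 0 < l → ∀ ε : ℝ, 0 < ε → ε ≤ 1 →
    |PsiEdge ((1 + ε) * l) - PsiEdge l| ≤ C * ε * PsiEdge l := by
  refine ⟨12, by norm_num, fun l hl ε hε hε₁ => ?_⟩
  have hΨ := psiEdge_nonneg hl.le
  have ht : 1 ≤ 1 + ε := by linarith
  calc |PsiEdge ((1 + ε) * l) - PsiEdge l|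
      ≤ (1 + ε) * (1 + ε) * ((1 + ε) * (1 + ε) - 1) * PsiEdge l :=
        (withinFactor_psiEdge hl.le ht).abs_sub_le (by nlinarith) hΨ
    _ ≤ 4 * (3 * ε) * PsiEdge l := by
        gcongr <;> nlinarith
    _ = 12 * ε * PsiEdge l := by ring
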